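/- Tweedie's formula: if X_i = √(ᾱ) X_0 + √(1-ᾱ) Z with Z ~ N(0, I) independent of X_0, then the score of the marginal density of X_i satisfies ∇ log p(x) = (√(ᾱ)·E[X_0 | X_i = x] - x)/(1-ᾱ). -/

import Mathlib

open Real MeasureTheory
open InnerProductSpace

variable {E : Type*} [NormedAddCommGroup E] [InnerProductSpace ℝ E] [CompleteSpace E]

lemma gauss_hasFDerivAt (σ2 : ℝ) (hσ : 0 < σ2) (C : ℝ) (c : E) (x : E) :
    HasFDerivAt (fun x : E => C * Real.exp (-‖x - c‖ ^ 2 / (2 * σ2)))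
      (toDual ℝ E ((C * Real.exp (-‖x - c‖ ^ 2 / (2 * σ2)) * σ2⁻¹) • (c - x))) x := by
  have h1 : HasFDerivAt (fun x : E => ‖x - c‖ ^ 2)
      (2 • (innerSL ℝ (x - c))) x := by
    simpa using ((hasFDerivAt_id x).sub_const c).norm_sq
  have h2 : HasFDerivAt (fun x : E => -‖x - c‖ ^ 2 / (2 * σ2))
      ((-(2 * σ2)⁻¹) • (2 • (innerSL ℝ (x - c)))) x := by
    have := h1.const_mul (-(2 * σ2)⁻¹)
    refine this.congr_of_eventuallyEq (Filter.Eventually.of_forall fun y => ?_)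
    ring
  have h3 := (Real.hasDerivAt_exp (-‖x - c‖ ^ 2 / (2 * σ2))).comp_hasFDerivAt x h2
  have h4 := h3.const_mul C
  refine h4.congr_fderiv (Eq.symm ?_)
  ext y
  simp [real_inner_smul_left, inner_sub_left]
  ring_nf

lemma gauss_mul_bound (σ2 : ℝ) (hσ : 0 < σ2) (t : ℝ) (ht : 0 ≤ t) :
    t * Real.exp (-t ^ 2 / (2 * σ2)) ≤ max 1 (2 * σ2) := by
  rcases le_or_gt t 1 with h | h
  · calc t * Real.exp (-t ^ 2 / (2 * σ2)) ≤ 1 * 1 := by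
          apply mul_le_mul h (Real.exp_le_one_iff.mpr
            (div_nonpos_of_nonpos_of_nonneg (by nlinarith [sq_nonneg t]) (by positivity)))
            (Real.exp_nonneg _) (by norm_num)
        _ ≤ _ := by simp
  · have h1 : t ^ 2 / (2 * σ2) ≤ Real.exp (t ^ 2 / (2 * σ2)) :=
      (Real.add_one_le_exp _).trans' (by linarith)
    have h2 : Real.exp (-t ^ 2 / (2 * σ2)) = (Real.exp (t ^ 2 / (2 * σ2)))⁻¹ := by
      rw [← Real.exp_neg]; ring_nf
    have : t * Real.exp (-t ^ 2 / (2 * σ2)) ≤ t * (t ^ 2 / (2 * σ2))⁻¹ := by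
      rw [h2]
      exact mul_le_mul_of_nonneg_left (inv_anti₀ (by positivity) h1) ht
    refine this.trans (le_max_of_le_right ?_)
    have heq : t * (t ^ 2 / (2 * σ2))⁻¹ = 2 * σ2 / t := by
      field_simp
    rw [heq]
    exact div_le_self (by positivity) h.le


/-- Tweedie's formula: if `Xᵢ = √ᾱ X₀ + √(1-ᾱ) Z` with `Z ~ N(0, I)` independent of
`X₀` (so the marginal density of `Xᵢ` is `p(x) = ∫ p₀(x₀) g(x, x₀) dx₀` with `g` the
Gaussian kernel with mean `√ᾱ x₀` and covariance `(1-ᾱ)I`), then the score of the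
marginal density satisfies `∇ log p(x) = (√ᾱ·E[X₀ | Xᵢ = x] − x)/(1-ᾱ)`, where
`E[X₀ | Xᵢ = x] = (p x)⁻¹ • ∫ p₀(x₀) g(x, x₀) • x₀ dx₀` is the MMSE denoiser. -/
theorem tweedie_formula (n : ℕ) (hn : 0 < n) (ᾱ : ℝ) (hᾱ : ᾱ ∈ Set.Ioo (0:ℝ) 1)
    (p₀ : EuclideanSpace ℝ (Fin n) → ℝ)
    (hp₀_nonneg : ∀ x₀, 0 ≤ p₀ x₀)
    (hp₀_int : ∫ x₀, p₀ x₀ = 1)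
    (g : EuclideanSpace ℝ (Fin n) → EuclideanSpace ℝ (Fin n) → ℝ)
    (hg : ∀ x x₀, g x x₀ = (2 * π * (1 - ᾱ)) ^ (-(n : ℝ) / 2) *
      Real.exp (-‖x - Real.sqrt ᾱ • x₀‖ ^ 2 / (2 * (1 - ᾱ))))
    (p : EuclideanSpace ℝ (Fin n) → ℝ)
    (hp : ∀ x, p x = ∫ x₀, p₀ x₀ * g x x₀)
    (hp_pos : ∀ x, 0 < p x)
    (hint₁ : ∀ x, Integrable (fun x₀ => p₀ x₀ * g x x₀))
    (hint₂ : ∀ x, Integrable (fun x₀ => (p₀ x₀ * g x x₀) • x₀))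
    (xhat : EuclideanSpace ℝ (Fin n) → EuclideanSpace ℝ (Fin n))
    (hxhat : ∀ x, xhat x = (p x)⁻¹ • ∫ x₀, (p₀ x₀ * g x x₀) • x₀) :
    ∀ x, gradient (fun x' => Real.log (p x')) x
      = (1 - ᾱ)⁻¹ • (Real.sqrt ᾱ • xhat x - x) := by
  intro a
  obtain ⟨hα0, hα1⟩ := hᾱ
  set σ2 : ℝ := 1 - ᾱ with hσ2
  have hσ : 0 < σ2 := by simp [hσ2]; linarith
  set C : ℝ := (2 * π * σ2) ^ (-(n : ℝ) / 2) with hCdef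
  have hC : 0 < C := Real.rpow_pos_of_pos (by positivity) _
  -- p₀ integrable
  have hp₀_integrable : Integrable p₀ := by
    by_contra hni
    rw [integral_undef hni] at hp₀_int
    norm_num at hp₀_int
  -- local notation
  set F : EuclideanSpace ℝ (Fin n) → EuclideanSpace ℝ (Fin n) → ℝ := fun x x₀ => p₀ x₀ * g x x₀ with hF
  set vfun : EuclideanSpace ℝ (Fin n) → EuclideanSpace ℝ (Fin n) → EuclideanSpace ℝ (Fin n) := fun x x₀ => (σ2⁻¹ * F x x₀) • (Real.sqrt ᾱ • x₀ - x) with hvfun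
  set F' : EuclideanSpace ℝ (Fin n) → EuclideanSpace ℝ (Fin n) → (EuclideanSpace ℝ (Fin n) →L[ℝ] ℝ) := fun x x₀ => toDual ℝ (EuclideanSpace ℝ (Fin n)) (vfun x x₀) with hF'
  -- pointwise differentiability
  have hdiff : ∀ (x₀ x : EuclideanSpace ℝ (Fin n)), HasFDerivAt (fun x => F x x₀) (F' x x₀) x := by
    intro x₀ x
    have hgr : (fun x => F x x₀) =
        (fun x => p₀ x₀ * (C * Real.exp (-‖x - Real.sqrt ᾱ • x₀‖ ^ 2 / (2 * σ2)))) := by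
      funext y; rw [hF]; simp only; rw [hg]
    rw [hgr]
    have h := (gauss_hasFDerivAt σ2 hσ C (Real.sqrt ᾱ • x₀) x).const_mul (p₀ x₀)
    refine h.congr_fderiv (Eq.symm ?_)
    rw [hF', hvfun, hF]
    simp only
    rw [hg x x₀]
    rw [← (toDual ℝ (EuclideanSpace ℝ (Fin n))).map_smul, smul_smul]
    congr 1
    ring
  -- norm bound for F'
  set M : ℝ := σ2⁻¹ * C * max 1 (2 * σ2) with hM
  have hbound : ∀ (x₀ : EuclideanSpace ℝ (Fin n)), ∀ x ∈ Metric.ball a 1,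
      ‖F' x x₀‖ ≤ M * p₀ x₀ := by
    intro x₀ x _
    rw [hF']
    simp only
    rw [(toDual ℝ (EuclideanSpace ℝ (Fin n))).norm_map, norm_smul]
    rw [hF]
    simp only
    rw [hg x x₀]
    have hgn : 0 ≤ C * Real.exp (-‖x - Real.sqrt ᾱ • x₀‖ ^ 2 / (2 * σ2)) := by positivity
    have h1 : ‖σ2⁻¹ * (p₀ x₀ * (C * Real.exp (-‖x - Real.sqrt ᾱ • x₀‖ ^ 2 / (2 * σ2))))‖
        = σ2⁻¹ * p₀ x₀ * (C * Real.exp (-‖x - Real.sqrt ᾱ • x₀‖ ^ 2 / (2 * σ2))) := by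
      rw [Real.norm_eq_abs, abs_of_nonneg]
      · ring
      · have := hp₀_nonneg x₀; positivity
    rw [h1]
    have h2 : ‖Real.sqrt ᾱ • x₀ - x‖ = ‖x - Real.sqrt ᾱ • x₀‖ := norm_sub_rev _ _
    rw [h2]
    set t : ℝ := ‖x - Real.sqrt ᾱ • x₀‖ with htdef
    have hkey : t * Real.exp (-t ^ 2 / (2 * σ2)) ≤ max 1 (2 * σ2) :=
      gauss_mul_bound σ2 hσ t (norm_nonneg _)
    have : σ2⁻¹ * p₀ x₀ * (C * Real.exp (-t ^ 2 / (2 * σ2))) * t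
        = (σ2⁻¹ * C * (t * Real.exp (-t ^ 2 / (2 * σ2)))) * p₀ x₀ := by ring
    rw [this, hM]
    apply mul_le_mul_of_nonneg_right _ (hp₀_nonneg x₀)
    apply mul_le_mul_of_nonneg_left hkey (by positivity)
  -- integrability pieces
  have hint2' : Integrable (fun x₀ => Real.sqrt ᾱ • ((F a x₀) • x₀)) :=
    (hint₂ a).smul (Real.sqrt ᾱ)
  have hint1' : Integrable (fun x₀ => (F a x₀) • a) := (hint₁ a).smul_const a
  have heq : vfun a = fun x₀ => σ2⁻¹ • (Real.sqrt ᾱ • ((F a x₀) • x₀) - (F a x₀) • a) := by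
    funext x₀
    rw [hvfun]
    module
  -- integrability of vfun a
  have hvint : Integrable (vfun a) := by
    rw [heq]
    exact (hint2'.sub hint1').smul σ2⁻¹
  -- measurability
  have hF'meas : AEStronglyMeasurable (F' a) volume :=
    ((toDual ℝ (EuclideanSpace ℝ (Fin n))).continuous.comp_aestronglyMeasurable
      hvint.aestronglyMeasurable)
  -- differentiate under the integral
  have hderiv : HasFDerivAt (fun x => ∫ x₀, F x x₀)
      (∫ x₀, F' a x₀) a := by
    apply hasFDerivAt_integral_of_dominated_of_fderiv_le (bound := fun x₀ => M * p₀ x₀)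
      (Metric.ball_mem_nhds a one_pos)
    · exact Filter.Eventually.of_forall fun x => (hint₁ x).aestronglyMeasurable
    · exact hint₁ a
    · exact hF'meas
    · exact Filter.Eventually.of_forall fun x₀ x hx => hbound x₀ x hx
    · exact hp₀_integrable.const_mul M
    · exact Filter.Eventually.of_forall fun x₀ x _ => hdiff x₀ x
  -- identify the integral of F'
  have hFint : (∫ x₀, F' a x₀) = toDual ℝ (EuclideanSpace ℝ (Fin n)) (∫ x₀, vfun a x₀) := by
    rw [hF']
    exact ContinuousLinearMap.integral_comp_comm
      (toDual ℝ (EuclideanSpace ℝ (Fin n))).toContinuousLinearEquiv.toContinuousLinearMap hvint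
  -- compute ∫ vfun a
  have hwval : (∫ x₀, vfun a x₀)
      = σ2⁻¹ • (Real.sqrt ᾱ • (∫ x₀, (F a x₀) • x₀) - (p a) • a) := by
    rw [heq, integral_smul, integral_sub hint2' hint1',
      integral_smul, integral_smul_const]
    congr 2
    rw [hp a]
  -- gradient of p
  have hgradp : HasGradientAt p (σ2⁻¹ • (Real.sqrt ᾱ • (∫ x₀, (F a x₀) • x₀) - (p a) • a)) a := by
    rw [hasGradientAt_iff_hasFDerivAt, ← hwval, ← hFint]
    have : p = fun x => ∫ x₀, F x x₀ := by funext x; rw [hp x, hF]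
    rw [this]
    exact hderiv
  -- gradient of log p
  have hgradlog : HasGradientAt (fun x' => Real.log (p x'))
      ((p a)⁻¹ • σ2⁻¹ • (Real.sqrt ᾱ • (∫ x₀, (F a x₀) • x₀) - (p a) • a)) a := by
    rw [hasGradientAt_iff_hasFDerivAt, _root_.map_smul]
    exact (Real.hasDerivAt_log (hp_pos a).ne').comp_hasFDerivAt a hgradp.hasFDerivAt
  rw [hgradlog.gradient, hxhat a]
  have hJ : (∫ x₀, (F a x₀) • x₀) = ∫ x₀, (p₀ x₀ * g a x₀) • x₀ := rfl
  rw [hJ]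
  have hpne : p a ≠ 0 := (hp_pos a).ne'
  have h3 : p a - p a * ᾱ ≠ 0 := by
    have : p a - p a * ᾱ = p a * σ2 := by rw [hσ2]; ring
    rw [this]
    exact mul_ne_zero hpne hσ.ne'
  match_scalars <;> (field_simp; try ring) <;> simp
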